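/- Let θ : S → T be a premorphism of inverse semigroups, and suppose a, b ∈ S satisfy either a⁻¹*a ≥ b*b⁻¹ or a⁻¹*a ≤ b*b⁻¹ in the natural partial order. Then θ(a*b) = θ(a)*θ(b). -/

import Mathlib

/-- An inverse semigroup: a semigroup in which every element `a` has a
(unique) inverse `a⁻¹` with `a * a⁻¹ * a = a` and `a⁻¹ * a * a⁻¹ = a⁻¹`. -/
class InverseSemigroup (S : Type*) extends Semigroup S, Inv S where
  mul_inv_mul : ∀ a : S, a * a⁻¹ * a = a
  inv_mul_inv : ∀ a : S, a⁻¹ * a * a⁻¹ = a⁻¹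
  inv_unique : ∀ a b : S, a * b * a = a → b * a * b = b → b = a⁻¹

/-- The natural partial order on an inverse semigroup:
`a ≤ b` iff `a = e * b` for some idempotent `e`. -/
def npo {S : Type*} [InverseSemigroup S] (a b : S) : Prop :=
  ∃ e : S, e * e = e ∧ a = e * b

/-- A premorphism of inverse semigroups: `θ (a * b) ≤ θ a * θ b` in the
natural partial order of the codomain. -/
def IsPremorphism {S T : Type*} [InverseSemigroup S] [InverseSemigroup T]
    (θ : S → T) : Prop :=
  ∀ a b : S, npo (θ (a * b)) (θ a * θ b)

/-!
If `b * b⁻¹ ≤ a⁻¹ * a` then `b = a⁻¹ * (a * b)`, so `θ b ≤ (θ a)⁻¹ * θ (a * b)` (premorphisms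
preserve inverses) and hence `θ a * θ b ≤ θ a * (θ a)⁻¹ * θ (a * b) ≤ θ (a * b) ≤ θ a * θ b`.
The other case is the image of this one under inversion `a * b ↦ b⁻¹ * a⁻¹`.
-/

namespace InverseSemigroup

variable {S : Type*} [InverseSemigroup S]

protected theorem inv_inv (a : S) : a⁻¹⁻¹ = a :=
  (inv_unique a⁻¹ a (inv_mul_inv a) (mul_inv_mul a)).symm

theorem isIdempotentElem_mul_inv (a : S) : IsIdempotentElem (a * a⁻¹) := by
  rw [IsIdempotentElem, ← mul_assoc, mul_inv_mul]

theorem isIdempotentElem_inv_mul (a : S) : IsIdempotentElem (a⁻¹ * a) := by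
  rw [IsIdempotentElem, ← mul_assoc, inv_mul_inv]

theorem inv_eq_self_of_isIdempotentElem {e : S} (he : IsIdempotentElem e) : e⁻¹ = e :=
  (inv_unique e e (by rw [he.eq, he.eq]) (by rw [he.eq, he.eq])).symm

theorem isIdempotentElem_mul {e f : S} (he : IsIdempotentElem e) (hf : IsIdempotentElem f) :
    IsIdempotentElem (e * f) := by
  -- `f * (e * f)⁻¹ * e` is another inverse of `e * f`; this makes `(e * f)⁻¹` idempotent,
  -- hence equal to its own inverse `e * f`.
  have hfe : f * (e * f)⁻¹ * e = (e * f)⁻¹ := by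
    apply inv_unique
    · calc e * f * (f * (e * f)⁻¹ * e) * (e * f) = e * f * (e * f)⁻¹ * (e * f) := by
            simp only [mul_assoc, he.mul_self_mul, hf.mul_self_mul]
        _ = e * f := mul_inv_mul _
    · calc f * (e * f)⁻¹ * e * (e * f) * (f * (e * f)⁻¹ * e)
          = f * ((e * f)⁻¹ * (e * f) * (e * f)⁻¹) * e := by
            simp only [mul_assoc, he.mul_self_mul, hf.mul_self_mul]
        _ = f * (e * f)⁻¹ * e := by rw [inv_mul_inv]
  have hinv : IsIdempotentElem (e * f)⁻¹ := by
    calc (e * f)⁻¹ * (e * f)⁻¹ = f * ((e * f)⁻¹ * (e * f) * (e * f)⁻¹) * e := by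
          conv_lhs => rw [← hfe]
          simp only [mul_assoc]
      _ = (e * f)⁻¹ := by rw [inv_mul_inv, hfe]
  rw [← InverseSemigroup.inv_inv (e * f), inv_eq_self_of_isIdempotentElem hinv]
  exact hinv

theorem commute_of_isIdempotentElem {e f : S} (he : IsIdempotentElem e)
    (hf : IsIdempotentElem f) : Commute e f := by
  have hef := isIdempotentElem_mul he hf
  have hfe := isIdempotentElem_mul hf he
  have h : f * e = (e * f)⁻¹ := by
    apply inv_unique
    · calc e * f * (f * e) * (e * f) = e * f * (e * f) := by
            simp only [mul_assoc, he.mul_self_mul, hf.mul_self_mul]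
        _ = e * f := hef.eq
    · calc f * e * (e * f) * (f * e) = f * e * (f * e) := by
            simp only [mul_assoc, he.mul_self_mul, hf.mul_self_mul]
        _ = f * e := hfe.eq
  rw [Commute, SemiconjBy, h, inv_eq_self_of_isIdempotentElem hef]

protected theorem mul_inv_rev (a b : S) : (a * b)⁻¹ = b⁻¹ * a⁻¹ := by
  have hcomm := commute_of_isIdempotentElem (isIdempotentElem_mul_inv b)
    (isIdempotentElem_inv_mul a)
  refine (inv_unique _ _ ?_ ?_).symm
  · calc a * b * (b⁻¹ * a⁻¹) * (a * b) = a * (b * b⁻¹ * (a⁻¹ * a)) * b := by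
          simp only [mul_assoc]
      _ = a * a⁻¹ * a * (b * b⁻¹ * b) := by rw [hcomm.eq]; simp only [mul_assoc]
      _ = a * b := by rw [mul_inv_mul, mul_inv_mul]
  · calc b⁻¹ * a⁻¹ * (a * b) * (b⁻¹ * a⁻¹) = b⁻¹ * (a⁻¹ * a * (b * b⁻¹)) * a⁻¹ := by
          simp only [mul_assoc]
      _ = b⁻¹ * b * b⁻¹ * (a⁻¹ * a * a⁻¹) := by rw [← hcomm.eq]; simp only [mul_assoc]
      _ = b⁻¹ * a⁻¹ := by rw [inv_mul_inv, inv_mul_inv]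

theorem mul_inv_mul_of_npo {x z : S} (h : npo x z) : x * x⁻¹ * z = x := by
  obtain ⟨e, (he : IsIdempotentElem e), rfl⟩ := h
  rw [InverseSemigroup.mul_inv_rev, inv_eq_self_of_isIdempotentElem he]
  calc e * z * (z⁻¹ * e) * z = e * (z * z⁻¹ * e) * z := by simp only [mul_assoc]
    _ = e * (z * z⁻¹ * z) := by
      rw [(commute_of_isIdempotentElem (isIdempotentElem_mul_inv z) he).eq]
      simp only [mul_assoc, he.mul_self_mul]
    _ = e * z := by rw [mul_inv_mul]

theorem mul_eq_of_npo {x f : S} (h : npo x f) (hf : IsIdempotentElem f) : f * x = x := by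
  obtain ⟨g, (hg : IsIdempotentElem g), rfl⟩ := h
  rw [← mul_assoc, (commute_of_isIdempotentElem hf hg).eq, hf.mul_mul_self]

theorem npo_trans {x y z : S} (hxy : npo x y) (hyz : npo y z) : npo x z := by
  obtain ⟨e, (he : IsIdempotentElem e), rfl⟩ := hxy
  obtain ⟨f, (hf : IsIdempotentElem f), rfl⟩ := hyz
  exact ⟨e * f, isIdempotentElem_mul he hf, (mul_assoc e f z).symm⟩

theorem npo_antisymm {x y : S} (hxy : npo x y) (hyx : npo y x) : x = y := by
  have hx := mul_inv_mul_of_npo hxy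
  have hy := mul_inv_mul_of_npo hyx
  calc x = x * x⁻¹ * (y * y⁻¹ * x) := by rw [hy, hx]
    _ = y * y⁻¹ * (x * x⁻¹ * x) := by
      rw [← mul_assoc, (commute_of_isIdempotentElem (isIdempotentElem_mul_inv x)
        (isIdempotentElem_mul_inv y)).eq]
      simp only [mul_assoc]
    _ = y := by rw [mul_inv_mul, hy]

theorem npo_mul_right {x y : S} (h : npo x y) (c : S) : npo (x * c) (y * c) := by
  obtain ⟨e, (he : IsIdempotentElem e), rfl⟩ := h
  exact ⟨e, he, mul_assoc e y c⟩

theorem npo_mul_left {x y : S} (h : npo x y) (c : S) : npo (c * x) (c * y) := by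
  obtain ⟨e, (he : IsIdempotentElem e), rfl⟩ := h
  have hcomm := commute_of_isIdempotentElem he (isIdempotentElem_inv_mul c)
  refine ⟨c * e * c⁻¹, ?_, ?_⟩
  · calc c * e * c⁻¹ * (c * e * c⁻¹) = c * (e * (c⁻¹ * c)) * e * c⁻¹ := by simp only [mul_assoc]
      _ = c * c⁻¹ * c * (e * e) * c⁻¹ := by rw [hcomm.eq]; simp only [mul_assoc]
      _ = c * e * c⁻¹ := by rw [mul_inv_mul, he.eq]
  · calc c * (e * y) = c * c⁻¹ * c * (e * y) := by rw [mul_inv_mul]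
      _ = c * (c⁻¹ * c * e) * y := by simp only [mul_assoc]
      _ = c * e * c⁻¹ * (c * y) := by rw [← hcomm.eq]; simp only [mul_assoc]

theorem inv_mul_mul_of_npo {a b : S} (h : npo (b * b⁻¹) (a⁻¹ * a)) : a⁻¹ * (a * b) = b := by
  calc a⁻¹ * (a * b) = a⁻¹ * a * (b * b⁻¹) * b := by rw [mul_assoc _ _ b, mul_inv_mul, mul_assoc]
    _ = b := by rw [mul_eq_of_npo h (isIdempotentElem_inv_mul a), mul_inv_mul]

end InverseSemigroup

namespace IsPremorphism

open InverseSemigroup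

variable {S T : Type*} [InverseSemigroup S] [InverseSemigroup T] {θ : S → T}

theorem map_mul_map_inv_mul (hθ : IsPremorphism θ) (b : S) : θ b * θ b⁻¹ * θ b = θ b := by
  have hle : npo (θ b) (θ b * θ b⁻¹ * θ b) := by
    have hb := hθ (b * b⁻¹) b
    rw [mul_inv_mul] at hb
    exact npo_trans hb (npo_mul_right (hθ b b⁻¹) (θ b))
  calc θ b * θ b⁻¹ * θ b = θ b * (θ b)⁻¹ * (θ b * θ b⁻¹ * θ b) := by
        simp only [← mul_assoc, mul_inv_mul]
    _ = θ b := mul_inv_mul_of_npo hle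

theorem map_inv (hθ : IsPremorphism θ) (b : S) : θ b⁻¹ = (θ b)⁻¹ :=
  inv_unique _ _ (hθ.map_mul_map_inv_mul b)
    (by simpa only [InverseSemigroup.inv_inv] using hθ.map_mul_map_inv_mul b⁻¹)

theorem map_mul_of_npo_mul_inv_inv_mul (hθ : IsPremorphism θ) {a b : S}
    (h : npo (b * b⁻¹) (a⁻¹ * a)) : θ (a * b) = θ a * θ b := by
  have hb : npo (θ b) ((θ a)⁻¹ * θ (a * b)) := by
    simpa only [inv_mul_mul_of_npo h, hθ.map_inv] using hθ a⁻¹ (a * b)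
  refine npo_antisymm (hθ a b) (npo_trans (npo_mul_left hb (θ a)) ?_)
  rw [← mul_assoc]
  exact ⟨_, isIdempotentElem_mul_inv (θ a), rfl⟩

theorem map_mul_of_npo_inv_mul_mul_inv (hθ : IsPremorphism θ) {a b : S}
    (h : npo (a⁻¹ * a) (b * b⁻¹)) : θ (a * b) = θ a * θ b := by
  have h' : npo (a⁻¹ * a⁻¹⁻¹) (b⁻¹⁻¹ * b⁻¹) := by
    simpa only [InverseSemigroup.inv_inv] using h
  calc θ (a * b) = (θ (b⁻¹ * a⁻¹))⁻¹ := by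
        rw [← hθ.map_inv, ← InverseSemigroup.mul_inv_rev, InverseSemigroup.inv_inv]
    _ = (θ b⁻¹ * θ a⁻¹)⁻¹ := by rw [hθ.map_mul_of_npo_mul_inv_inv_mul h']
    _ = θ a * θ b := by
        rw [InverseSemigroup.mul_inv_rev, ← hθ.map_inv, ← hθ.map_inv,
          InverseSemigroup.inv_inv, InverseSemigroup.inv_inv]

end IsPremorphism

theorem premorphism_is_hom_of_comparable {S T : Type*} [InverseSemigroup S] [InverseSemigroup T]
    (θ : S → T) (hθ : IsPremorphism θ) (a b : S)
    (h : npo (b * b⁻¹) (a⁻¹ * a) ∨ npo (a⁻¹ * a) (b * b⁻¹)) :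
    θ (a * b) = θ a * θ b := by
  rcases h with h | h
  · exact hθ.map_mul_of_npo_mul_inv_inv_mul h
  · exact hθ.map_mul_of_npo_inv_mul_mul_inv h
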